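/- Let B be a positive semidefinite n×n matrix with all diagonal entries equal to 1, let f be a convex function on an open interval I, and let A be a Hermitian n×n matrix with spectrum in I. Then for every k = 1, …, n, Σ_{i=1}^k λ_i(f(A ∘ B)) ≤ Σ_{i=1}^k λ_i(f(A) ∘ B), where ∘ denotes the Schur (entrywise) product. -/

import Mathlib

/-!
Let `ν_m`, `v_m` be the eigenvalues and orthonormal eigenvectors of `A ∘ B`; then `f(A ∘ B)` has
eigenvalues `f(ν_m)` on the same eigenvectors. Writing `A = ∑ λ_j u_j u_jᴴ`, the quadratic form
`⟨v, (g(A) ∘ B) v⟩` equals `∑ g(λ_j) r_j` with weights `r_j = ⟨ū_j ∘ v, B (ū_j ∘ v)⟩ ≥ 0`, which sum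
to `⟨v, v⟩ = 1` because `B` has unit diagonal. Jensen's inequality for these weights gives
`f(ν_m) ≤ ⟨v_m, (f(A) ∘ B) v_m⟩`. Summing over the `k` indices with the largest `f(ν_m)` and using
Ky Fan's maximum principle for `f(A) ∘ B` (a sum of `⟨v_m, H v_m⟩` over `k` orthonormal vectors is
at most the sum of the `k` largest eigenvalues of `H`) gives the claim.
-/

open scoped ComplexOrder

/-- The eigenvalues of a (Hermitian) matrix arranged in non-increasing order, counted
with multiplicity; junk value `0` for non-Hermitian matrices. -/
noncomputable def eigDesc {n : ℕ} (A : Matrix (Fin n) (Fin n) ℂ) (i : Fin n) : ℝ :=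
  if h : A.IsHermitian then (h.eigenvalues ∘ Tuple.sort h.eigenvalues) i.rev else 0

open Finset Matrix

lemma sum_mul_le_sum_of_forall_le {ι : Type*} [Fintype ι] [DecidableEq ι] (T : Finset ι)
    (c d : ι → ℝ) (hc0 : ∀ i, 0 ≤ c i) (hc1 : ∀ i, c i ≤ 1) (hc : ∑ i, c i = #T)
    (hT : ∀ i ∈ T, ∀ j ∉ T, d j ≤ d i) :
    ∑ i, c i * d i ≤ ∑ i ∈ T, d i := by
  rcases T.eq_empty_or_nonempty with rfl | hne
  · simp [(sum_eq_zero_iff_of_nonneg fun i _ => hc0 i).1 (by simpa using hc)]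
  -- With `t` between the values of `d` off `T` and on `T`, every term below is nonnegative, and
  -- since `∑ i, c i = #T` the terms sum to `∑ i ∈ T, d i - ∑ i, c i * d i`.
  set t := T.inf' hne d
  have h_term : ∀ i, 0 ≤ ((if i ∈ T then 1 else 0) - c i) * (d i - t) := by
    intro i
    by_cases hi : i ∈ T
    · simp only [hi, if_true]
      exact mul_nonneg (by linarith [hc1 i]) (by linarith [inf'_le d hi])
    · simp only [hi, if_false]
      exact mul_nonneg_of_nonpos_of_nonpos (by linarith [hc0 i])
        (by linarith [(le_inf'_iff hne d).2 fun i' hi' => hT i' hi' i hi])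
  have h := sum_nonneg fun i (_ : i ∈ univ) => h_term i
  simp only [sub_mul, mul_sub, sum_sub_distrib, ← sum_mul, ite_mul, one_mul, zero_mul,
    sum_ite_mem, univ_inter, hc, sum_const, nsmul_eq_mul] at h
  linarith

lemma exists_finset_sum_eq_sum_sort_rev {n k : ℕ} (hk : k ≤ n) (d : Fin n → ℝ) :
    ∃ T : Finset (Fin n), #T = k ∧ (∀ i ∈ T, ∀ j ∉ T, d j ≤ d i) ∧
      ∑ i ∈ T, d i =
        ∑ i ∈ univ.filter (fun i : Fin n => (i : ℕ) < k), (d ∘ Tuple.sort d) i.rev := by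
  set e : Equiv.Perm (Fin n) := Fin.revPerm.trans (Tuple.sort d)
  refine ⟨(univ.filter (fun i : Fin n => (i : ℕ) < k)).map e.toEmbedding, ?_, ?_,
    by rw [sum_map]; rfl⟩
  · rw [card_map, Fin.card_filter_val_lt, min_eq_right hk]
  · intro i hi j hj
    rw [mem_map_equiv, mem_filter] at hi hj
    have hji : (Tuple.sort d).symm j ≤ (Tuple.sort d).symm i := by
      simp only [e, Equiv.symm_trans, Fin.revPerm_symm, Equiv.trans_apply, Fin.revPerm_apply,
        mem_univ, Fin.val_rev, true_and, not_lt] at hi hj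
      rw [Fin.le_def]
      omega
    simpa using Tuple.monotone_sort d hji

lemma sum_mul_le_sum_sort_rev {n k : ℕ} (hk : k ≤ n) (c d : Fin n → ℝ) (hc0 : ∀ i, 0 ≤ c i)
    (hc1 : ∀ i, c i ≤ 1) (hc : ∑ i, c i = k) :
    ∑ i, c i * d i ≤
      ∑ i ∈ univ.filter (fun i : Fin n => (i : ℕ) < k), (d ∘ Tuple.sort d) i.rev := by
  obtain ⟨T, hT, hdom, hsum⟩ := exists_finset_sum_eq_sum_sort_rev hk d
  exact hsum ▸ sum_mul_le_sum_of_forall_le T c d hc0 hc1 (hT ▸ hc) hdom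

lemma Tuple.comp_sort_eq_of_map_univ_eq {α : Type*} [LinearOrder α] {n : ℕ} {g h : Fin n → α}
    (hgh : univ.val.map g = univ.val.map h) : g ∘ Tuple.sort g = h ∘ Tuple.sort h := by
  rw [Fin.univ_val_map, Fin.univ_val_map, Multiset.coe_eq_coe] at hgh
  have hperm := (Equiv.Perm.ofFn_comp_perm (Tuple.sort g) g).trans
    (hgh.trans (Equiv.Perm.ofFn_comp_perm (Tuple.sort h) h).symm)
  exact List.ofFn_injective <| hperm.eq_of_sortedLE
    (Tuple.monotone_sort g).sortedLE_ofFn (Tuple.monotone_sort h).sortedLE_ofFn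

section

variable {𝕜 n : Type*} [RCLike 𝕜] [Fintype n] [DecidableEq n]

lemma sum_norm_sq_row_of_mem_unitaryGroup {U : Matrix n n 𝕜} (hU : U ∈ unitaryGroup n 𝕜) (i : n) :
    ∑ j, ‖U i j‖ ^ 2 = 1 := by
  have h : (U * star U) i i = (1 : Matrix n n 𝕜) i i := by rw [Unitary.mul_star_self_of_mem hU]
  simp only [mul_apply, star_apply, RCLike.star_def, RCLike.mul_conj, one_apply_eq] at h
  exact_mod_cast h

lemma sum_norm_sq_col_of_mem_unitaryGroup {U : Matrix n n 𝕜} (hU : U ∈ unitaryGroup n 𝕜) (j : n) :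
    ∑ i, ‖U i j‖ ^ 2 = 1 := by
  simpa using sum_norm_sq_row_of_mem_unitaryGroup (Unitary.star_mem hU) j

lemma star_dotProduct_col_of_mem_unitaryGroup {U : Matrix n n 𝕜} (hU : U ∈ unitaryGroup n 𝕜)
    (j : n) : star (Uᵀ j) ⬝ᵥ Uᵀ j = 1 := by
  have h : (star U * U) j j = (1 : Matrix n n 𝕜) j j := by rw [Unitary.star_mul_self_of_mem hU]
  simpa [mul_apply, dotProduct] using h

lemma dotProduct_conj_diagonal_mulVec (U : Matrix n n 𝕜) (δ : n → 𝕜) (v : n → 𝕜) :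
    star v ⬝ᵥ (U * diagonal δ * Uᴴ) *ᵥ v =
      ∑ l, δ l * (star ((Uᴴ *ᵥ v) l) * (Uᴴ *ᵥ v) l) := by
  rw [← mulVec_mulVec, ← mulVec_mulVec, dotProduct_mulVec, ← conjTranspose_conjTranspose U,
    ← star_mulVec, conjTranspose_conjTranspose]
  simp only [dotProduct, mulVec_diagonal, Pi.star_apply]
  exact sum_congr rfl fun l _ => by ring

lemma dotProduct_conj_diagonal_hadamard_mulVec (U : Matrix n n 𝕜) (δ : n → 𝕜)
    (B : Matrix n n 𝕜) (u : n → 𝕜) :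
    star u ⬝ᵥ ((U * diagonal δ * Uᴴ) ⊙ B) *ᵥ u =
      ∑ m, δ m * (star (fun j => star (U j m) * u j) ⬝ᵥ B *ᵥ fun j => star (U j m) * u j) := by
  simp only [dotProduct, mulVec, hadamard_apply, mul_apply, diagonal_apply, mul_ite, mul_zero,
    sum_ite_eq', mem_univ, if_true, conjTranspose_apply, Pi.star_apply, star_mul',
    star_star, mul_sum, sum_mul]
  rw [sum_comm_cycle]
  exact sum_congr rfl fun m _ => sum_congr rfl fun i _ => sum_congr rfl fun j _ => by ring

lemma Matrix.IsHermitian.re_dotProduct_cfc_hadamard_mulVec {A : Matrix n n 𝕜}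
    (hA : A.IsHermitian) (g : ℝ → ℝ) (B : Matrix n n 𝕜) (u : n → 𝕜) :
    RCLike.re (star u ⬝ᵥ (cfc g A ⊙ B) *ᵥ u) =
      ∑ m, RCLike.re (star (fun j => star (hA.eigenvectorUnitary j m) * u j) ⬝ᵥ
        B *ᵥ fun j => star (hA.eigenvectorUnitary j m) * u j) * g (hA.eigenvalues m) := by
  rw [hA.cfc_eq, IsHermitian.cfc, Unitary.conjStarAlgAut_apply, star_eq_conjTranspose,
    dotProduct_conj_diagonal_hadamard_mulVec, map_sum]
  simp [mul_comm]

theorem ConvexOn.map_re_dotProduct_hadamard_mulVec_le {A B : Matrix n n 𝕜} {I : Set ℝ}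
    {f : ℝ → ℝ} (hf : ConvexOn ℝ I f) (hA : A.IsHermitian) (hAI : spectrum ℝ A ⊆ I)
    (hB : B.PosSemidef) (hB1 : ∀ i, B i i = 1) (u : n → 𝕜) (hu : star u ⬝ᵥ u = 1) :
    f (RCLike.re (star u ⬝ᵥ (A ⊙ B) *ᵥ u)) ≤ RCLike.re (star u ⬝ᵥ (cfc f A ⊙ B) *ᵥ u) := by
  obtain ⟨r, hr0, hform⟩ : ∃ r : n → ℝ, (∀ m, 0 ≤ r m) ∧ ∀ g : ℝ → ℝ,
      RCLike.re (star u ⬝ᵥ (cfc g A ⊙ B) *ᵥ u) = ∑ m, r m * g (hA.eigenvalues m) :=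
    ⟨_, fun m => (RCLike.nonneg_iff.1 (hB.dotProduct_mulVec_nonneg _)).1,
      (hA.re_dotProduct_cfc_hadamard_mulVec · B u)⟩
  have hr1 : ∑ m, r m = 1 := by
    have h1 : (1 : Matrix n n 𝕜) ⊙ B = 1 := by
      rw [one_hadamard, show B.diag = fun _ => 1 from funext hB1, diagonal_one]
    have h := hform fun _ => 1
    rw [cfc_const_one ℝ A, h1, one_mulVec, hu, RCLike.one_re] at h
    simpa only [mul_one] using h.symm
  calc f (RCLike.re (star u ⬝ᵥ (A ⊙ B) *ᵥ u)) = f (∑ m, r m • hA.eigenvalues m) := by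
        conv_lhs => rw [← cfc_id ℝ A, hform]
        rfl
    _ ≤ ∑ m, r m • f (hA.eigenvalues m) :=
        hf.map_sum_le (fun m _ => hr0 m) hr1 fun m _ => hAI (hA.eigenvalues_mem_spectrum_real m)
    _ = RCLike.re (star u ⬝ᵥ (cfc f A ⊙ B) *ᵥ u) := (hform f).symm

end

lemma eigDesc_cfc {n : ℕ} {M : Matrix (Fin n) (Fin n) ℂ} (hM : M.IsHermitian) (f : ℝ → ℝ)
    (i : Fin n) :
    eigDesc (cfc f M) i = ((f ∘ hM.eigenvalues) ∘ Tuple.sort (f ∘ hM.eigenvalues)) i.rev := by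
  have hC : (cfc f M).IsHermitian := cfc_predicate f M
  rw [eigDesc, dif_pos hC, Tuple.comp_sort_eq_of_map_univ_eq]
  have := congrArg (fun p => p.roots.map RCLike.re)
    ((hC.charpoly_eq).symm.trans (hM.charpoly_cfc_eq f))
  simpa [Polynomial.roots_prod, Finset.prod_ne_zero_iff, Polynomial.X_sub_C_ne_zero,
    Multiset.map_map, Function.comp_def] using this

lemma sum_re_dotProduct_mulVec_le_sum_eigDesc {n k : ℕ} (hk : k ≤ n)
    {H : Matrix (Fin n) (Fin n) ℂ} (hH : H.IsHermitian) {V : Matrix (Fin n) (Fin n) ℂ}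
    (hV : V ∈ unitaryGroup (Fin n) ℂ) (S : Finset (Fin n)) (hS : #S = k) :
    ∑ m ∈ S, (star (Vᵀ m) ⬝ᵥ H *ᵥ Vᵀ m).re ≤
      ∑ i ∈ univ.filter (fun i : Fin n => (i : ℕ) < k), eigDesc H i := by
  set U : Matrix (Fin n) (Fin n) ℂ := (hH.eigenvectorUnitary : Matrix (Fin n) (Fin n) ℂ)
  set d := hH.eigenvalues
  set P := Uᴴ * V
  have hP : P ∈ unitaryGroup (Fin n) ℂ := mul_mem (Unitary.star_mem hH.eigenvectorUnitary.2) hV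
  have hquad : ∀ m, (star (Vᵀ m) ⬝ᵥ H *ᵥ Vᵀ m).re = ∑ l, ‖P l m‖ ^ 2 * d l := by
    intro m
    conv_lhs => rw [hH.spectral_theorem, Unitary.conjStarAlgAut_apply, star_eq_conjTranspose,
      dotProduct_conj_diagonal_mulVec, Complex.re_sum]
    refine sum_congr rfl fun l _ => ?_
    change ((d l : ℂ) * (star (P l m) * P l m)).re = _
    rw [Complex.star_def, Complex.conj_mul', ← Complex.ofReal_pow, ← Complex.ofReal_mul,
      Complex.ofReal_re, mul_comm]
  set c : Fin n → ℝ := fun l => ∑ m ∈ S, ‖P l m‖ ^ 2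
  have hc1 : ∀ l, c l ≤ 1 := fun l =>
    (sum_le_sum_of_subset_of_nonneg (subset_univ S) fun m _ _ => by positivity).trans
      (sum_norm_sq_row_of_mem_unitaryGroup hP l).le
  have hc : ∑ l, c l = k := by
    rw [sum_comm, sum_congr rfl fun m _ => sum_norm_sq_col_of_mem_unitaryGroup hP m]
    simp [hS]
  calc ∑ m ∈ S, (star (Vᵀ m) ⬝ᵥ H *ᵥ Vᵀ m).re = ∑ l, c l * d l := by
        simp only [hquad, c, sum_mul]
        exact sum_comm
    _ ≤ _ := sum_mul_le_sum_sort_rev hk c d (fun l => by positivity) hc1 hc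
    _ = _ := by simp only [eigDesc, dif_pos hH]; rfl

theorem eigDesc_sum_cfc_hadamard_le {n : ℕ} (A B : Matrix (Fin n) (Fin n) ℂ)
    (hA : A.IsHermitian) (hB : B.PosSemidef) (hBdiag : ∀ i, B i i = 1)
    (I : Set ℝ) (hAspec : spectrum ℝ A ⊆ I)
    (f : ℝ → ℝ) (hf : ConvexOn ℝ I f) :
    ∀ k : ℕ, k ≤ n →
      ∑ i ∈ Finset.filter (fun i : Fin n => (i : ℕ) < k) Finset.univ,
          eigDesc (cfc f (Matrix.hadamard A B)) i ≤
        ∑ i ∈ Finset.filter (fun i : Fin n => (i : ℕ) < k) Finset.univ,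
          eigDesc (Matrix.hadamard (cfc f A) B) i := by
  intro k hk
  have hM : (A ⊙ B).IsHermitian := hA.hadamard hB.isHermitian
  set V : Matrix (Fin n) (Fin n) ℂ := (hM.eigenvectorUnitary : Matrix (Fin n) (Fin n) ℂ)
  obtain ⟨S, hS, -, hsum⟩ := exists_finset_sum_eq_sum_sort_rev hk (f ∘ hM.eigenvalues)
  calc ∑ i ∈ univ.filter (fun i : Fin n => (i : ℕ) < k), eigDesc (cfc f (A ⊙ B)) i
        = ∑ m ∈ S, f (hM.eigenvalues m) := by simp only [eigDesc_cfc hM]; exact hsum.symm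
    _ ≤ ∑ m ∈ S, (star (Vᵀ m) ⬝ᵥ (cfc f A ⊙ B) *ᵥ Vᵀ m).re := sum_le_sum fun m _ => by
        rw [hM.eigenvalues_eq m]
        exact hf.map_re_dotProduct_hadamard_mulVec_le hA hAspec hB hBdiag _
          (star_dotProduct_col_of_mem_unitaryGroup hM.eigenvectorUnitary.2 m)
    _ ≤ _ := sum_re_dotProduct_mulVec_le_sum_eigDesc hk
        ((cfc_predicate f A).isHermitian.hadamard hB.isHermitian) hM.eigenvectorUnitary.2 S hS
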